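/- Assume Assumption 3.3 holds for v and that for all 0 < s < t the 2×2 matrices Σ(t−s,t) and Σ(s,t) are positive definite. Let t_F ∈ (0,∞) be a global minimizer of L_{c₂}(t) = (b + c₂t)²/(2v(t)) over (0,∞), and suppose t_F > t₀ and c₁ ≥ sup_{s ∈ (0,t_F)} k(s,t_F)/s. Then inf_{t > t₀} sup_{s ∈ (0,t)} Υ(s,t) = L_{c₂}(t_F); that is, the tandem lower bound reduces to the single-FIFO-queue decay rate with service rate c₂. -/

import Mathlib

open Set Matrix
noncomputable section

/-- Γ(s,t) = (v(t) − v(t−s) + v(s))/2. -/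
def Gam (v : ℝ → ℝ) (s t : ℝ) : ℝ := (v t - v (t - s) + v s) / 2

/-- k(s,t) = Γ(s,t)(b + c₂t)/v(t). -/
def kvf (b c₂ : ℝ) (v : ℝ → ℝ) (s t : ℝ) : ℝ := Gam v s t * (b + c₂ * t) / v t

/-- The covariance matrix Σ(t−s, t): diagonal entries v(t), v(t−s), off-diagonal entries
Γ(t−s,t) = (v(t) − v(s) + v(t−s))/2. -/
def SigTS (v : ℝ → ℝ) (s t : ℝ) : Matrix (Fin 2) (Fin 2) ℝ :=
  !![v t, (v t - v s + v (t - s)) / 2; (v t - v s + v (t - s)) / 2, v (t - s)]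

/-- The covariance matrix Σ(s, t): diagonal entries v(t), v(s), off-diagonal Γ(s,t). -/
def SigM (v : ℝ → ℝ) (s t : ℝ) : Matrix (Fin 2) (Fin 2) ℝ :=
  !![v t, Gam v s t; Gam v s t, v s]

/-- Λ(y,z) = ½ (y,z) Σ(t−s,t)⁻¹ (y,z)ᵀ. -/
def Lam (v : ℝ → ℝ) (s t y z : ℝ) : ℝ :=
  (1 / 2) * (![y, z] ⬝ᵥ ((SigTS v s t)⁻¹ *ᵥ ![y, z]))

/-- Υ(s,t): Λ(b+c₂t, b+c₂t−c₁s) if k(s,t) > c₁s, else (b+c₂t)²/(2v(t)). -/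
def Ups (b c₁ c₂ : ℝ) (v : ℝ → ℝ) (s t : ℝ) : ℝ :=
  if c₁ * s < kvf b c₂ v s t then Lam v s t (b + c₂ * t) (b + c₂ * t - c₁ * s)
  else (b + c₂ * t) ^ 2 / (2 * v t)

/-!
By the Schur complement, in the branch `c₁ s < k(s, t)` one has
`Υ(s, t) = L(t) + (k(s, t) - c₁ s)² v(t) / (2 det Σ(s, t))`. For `s` close to `t` the branch is
not taken (`k(s, t) ≤ b + c₂ t < c₁ s`), so `L(t)` is a value of `Υ(·, t)` and
`sup_s Υ(s, t) ≥ L(t) ≥ L(t_F)` for every `t > t₀`; the hypothesis on `c₁` says that the branch is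
never taken at `t_F`, where the supremum is therefore exactly `L(t_F)`.

Since `sSup` of an unbounded set of reals is `0`, the inequality `sup_s Υ(s, t) ≥ L(t)` also needs
`Υ(·, t)` to be bounded. This is where concavity of `σ = √v` enters: it bounds `det Σ(s, t)`
below by `ε v(s) v(t - s)`, which controls the Schur term as `s → 0`.
-/

theorem ConcaveOn.mul_le_mul_add_sub_of_le_half {w : ℝ → ℝ} (hconc : ConcaveOn ℝ (Ici 0) w)
    (hmono : MonotoneOn w (Ici 0)) (hw0 : w 0 = 0) {s t : ℝ} (hs : 0 < s) (hst : s ≤ t / 2) :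
    (2 * w (t / 2) - w t) * w s ≤ w (t / 2) * (w s + w (t - s) - w t) := by
  have ht : 0 < t := by linarith
  set l := 2 * s / t with hl
  have hl0 : 0 ≤ l := by positivity
  have hl1 : l ≤ 1 := by rw [hl, div_le_one ht]; linarith
  have hleft : l * w (t / 2) ≤ w s := by
    have h := hconc.2 (mem_Ici.2 le_rfl) (mem_Ici.2 (by linarith : (0 : ℝ) ≤ t / 2))
      (sub_nonneg.2 hl1) hl0 (sub_add_cancel 1 l)
    simp only [smul_eq_mul, mul_zero, zero_add, hw0] at h
    rwa [show l * (t / 2) = s by rw [hl]; field_simp] at h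
  have hright : l * w (t / 2) + (1 - l) * w t ≤ w (t - s) := by
    have h := hconc.2 (mem_Ici.2 (by linarith : (0 : ℝ) ≤ t / 2)) (mem_Ici.2 ht.le)
      hl0 (sub_nonneg.2 hl1) (add_sub_cancel l 1)
    simp only [smul_eq_mul] at h
    rwa [show l * (t / 2) + (1 - l) * t = t - s by rw [hl]; field_simp; ring] at h
  have hmid0 : 0 ≤ w (t / 2) :=
    hw0 ▸ hmono (mem_Ici.2 le_rfl) (mem_Ici.2 (by linarith)) (by linarith)
  have hmidt : w (t / 2) ≤ w t := hmono (mem_Ici.2 (by linarith)) (mem_Ici.2 ht.le) (by linarith)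
  nlinarith [mul_le_mul_of_nonneg_left hright hmid0,
    mul_le_mul_of_nonneg_right hleft (sub_nonneg.2 hmidt)]

theorem StrictConcaveOn.exists_pos_mul_le_mul_add_sub {w : ℝ → ℝ}
    (hconc : StrictConcaveOn ℝ (Ici 0) w) (hmono : MonotoneOn w (Ici 0)) (hw0 : w 0 = 0)
    {t : ℝ} (ht : 0 < t) :
    ∃ ε > 0, ∀ s ∈ Ioo 0 t, ε * (w s * w (t - s)) ≤ w t * (w s + w (t - s) - w t) := by
  have hwt : 0 ≤ w t := hw0 ▸ hmono (mem_Ici.2 le_rfl) (mem_Ici.2 ht.le) ht.le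
  have hmid : w t < 2 * w (t / 2) := by
    have h := hconc.2 (mem_Ici.2 le_rfl) (mem_Ici.2 ht.le) ht.ne (by norm_num : (0 : ℝ) < 1 / 2)
      (by norm_num : (0 : ℝ) < 1 / 2) (by norm_num)
    simp only [smul_eq_mul, mul_zero, zero_add, hw0] at h
    rw [show 1 / 2 * t = t / 2 by ring] at h
    linarith
  have hmid0 : 0 < w (t / 2) := by linarith
  refine ⟨(2 * w (t / 2) - w t) / w (t / 2), div_pos (by linarith) hmid0, fun s hs => ?_⟩
  wlog hs2 : s ≤ t / 2 generalizing s
  · have h := this (t - s) ⟨by linarith [hs.2], by linarith [hs.1]⟩ (by linarith)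
    rw [sub_sub_cancel] at h
    linarith
  obtain ⟨hs0, hst⟩ := hs
  have hhalf := hconc.concaveOn.mul_le_mul_add_sub_of_le_half hmono hw0 hs0 hs2
  have hws : 0 ≤ w s := hw0 ▸ hmono (mem_Ici.2 le_rfl) (mem_Ici.2 hs0.le) hs0.le
  have hwts : w (t - s) ≤ w t := hmono (mem_Ici.2 (by linarith)) (mem_Ici.2 ht.le) (by linarith)
  have hwts0 : 0 ≤ w (t - s) :=
    hw0 ▸ hmono (mem_Ici.2 le_rfl) (mem_Ici.2 (by linarith)) (by linarith)
  have hdef : (2 * w (t / 2) - w t) / w (t / 2) * w s ≤ w s + w (t - s) - w t := by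
    rw [div_mul_eq_mul_div, div_le_iff₀ hmid0]; linarith
  have hdef0 : 0 ≤ w s + w (t - s) - w t :=
    le_trans (mul_nonneg (div_pos (by linarith) hmid0).le hws) hdef
  calc (2 * w (t / 2) - w t) / w (t / 2) * (w s * w (t - s))
      = (2 * w (t / 2) - w t) / w (t / 2) * w s * w (t - s) := by ring
    _ ≤ (w s + w (t - s) - w t) * w (t - s) := mul_le_mul_of_nonneg_right hdef hwts0
    _ ≤ (w s + w (t - s) - w t) * w t := mul_le_mul_of_nonneg_left hwts hdef0
    _ = _ := by ring

theorem Matrix.dotProduct_inv_fin_two_mulVec {K : Type*} [Field K] (a g c y z : K) (ha : a ≠ 0)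
    (hdet : a * c - g ^ 2 ≠ 0) :
    ![y, z] ⬝ᵥ (!![a, g; g, c]⁻¹ *ᵥ ![y, z])
      = y ^ 2 / a + (z - g * y / a) ^ 2 * a / (a * c - g ^ 2) := by
  have hinv : !![a, g; g, c]⁻¹ = (a * c - g ^ 2)⁻¹ • !![c, -g; -g, a] := by
    rw [Matrix.inv_def, Matrix.det_fin_two_of, Matrix.adjugate_fin_two_of, Ring.inverse_eq_inv',
      sq]
  rw [hinv]
  simp only [dotProduct, mulVec, smul_apply, of_apply, cons_val', cons_val_fin_one, smul_eq_mul,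
    Fin.sum_univ_two, cons_val_zero, cons_val_one, mul_neg, neg_mul]
  field_simp
  ring

theorem Ups_eq_of_lt_kvf {b c₁ c₂ s t : ℝ} {v : ℝ → ℝ} (hvt : v t ≠ 0)
    (hdet : v t * v s - Gam v s t ^ 2 ≠ 0) (h : c₁ * s < kvf b c₂ v s t) :
    Ups b c₁ c₂ v s t = (b + c₂ * t) ^ 2 / (2 * v t)
      + (kvf b c₂ v s t - c₁ * s) ^ 2 * v t / (2 * (v t * v s - Gam v s t ^ 2)) := by
  have hdetTS : v t * v (t - s) - ((v t - v s + v (t - s)) / 2) ^ 2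
      = v t * v s - Gam v s t ^ 2 := by unfold Gam; ring
  have hshift : b + c₂ * t - c₁ * s - (v t - v s + v (t - s)) / 2 * (b + c₂ * t) / v t
      = kvf b c₂ v s t - c₁ * s := by unfold kvf Gam; field_simp; ring
  rw [Ups, if_pos h, Lam, SigTS,
    Matrix.dotProduct_inv_fin_two_mulVec _ _ _ _ _ hvt (hdetTS ▸ hdet), hdetTS, hshift]
  field_simp

theorem Ups_eq_of_kvf_le {b c₁ c₂ s t : ℝ} {v : ℝ → ℝ} (h : kvf b c₂ v s t ≤ c₁ * s) :
    Ups b c₁ c₂ v s t = (b + c₂ * t) ^ 2 / (2 * v t) := by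
  rw [Ups, if_neg h.not_gt]

theorem sSup_image_Ups_of_forall_kvf_le {b c₁ c₂ t : ℝ} {v : ℝ → ℝ} (ht : 0 < t)
    (h : ∀ s ∈ Ioo 0 t, kvf b c₂ v s t ≤ c₁ * s) :
    sSup ((fun s => Ups b c₁ c₂ v s t) '' Ioo 0 t) = (b + c₂ * t) ^ 2 / (2 * v t) := by
  rw [image_congr fun s hs => Ups_eq_of_kvf_le (h s hs), (nonempty_Ioo.2 ht).image_const,
    csSup_singleton]

structure IsConcaveStdDev (v : ℝ → ℝ) : Prop where
  zero : v 0 = 0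
  pos : ∀ u > 0, 0 < v u
  strictMonoOn_sqrt : StrictMonoOn (fun u => √(v u)) (Ici 0)
  strictConcaveOn_sqrt : StrictConcaveOn ℝ (Ici 0) (fun u => √(v u))

namespace IsConcaveStdDev

variable {v : ℝ → ℝ} {b c₁ c₂ s t : ℝ}

theorem nonneg (hv : IsConcaveStdDev v) {u : ℝ} (hu : 0 ≤ u) : 0 ≤ v u := by
  rcases hu.eq_or_lt with rfl | hu
  · exact hv.zero.ge
  · exact (hv.pos u hu).le

theorem monotoneOn (hv : IsConcaveStdDev v) : MonotoneOn v (Ici 0) := fun x hx y hy hxy => by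
  simpa [Real.sqrt_le_sqrt_iff (hv.nonneg hy)] using hv.strictMonoOn_sqrt.monotoneOn hx hy hxy

theorem Gam_nonneg (hv : IsConcaveStdDev v) (hs : 0 ≤ s) (hst : s ≤ t) : 0 ≤ Gam v s t := by
  have := hv.monotoneOn (mem_Ici.2 (sub_nonneg.2 hst)) (mem_Ici.2 (hs.trans hst))
    (sub_le_self t hs)
  have := hv.nonneg hs
  unfold Gam; linarith

theorem Gam_le (hv : IsConcaveStdDev v) (hs : 0 ≤ s) (hst : s ≤ t) : Gam v s t ≤ v t := by
  have := hv.monotoneOn (mem_Ici.2 hs) (mem_Ici.2 (hs.trans hst)) hst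
  have := hv.nonneg (sub_nonneg.2 hst)
  unfold Gam; linarith

/-- In terms of `σ = √v`, `v t * v s - Γ² = (σ s + σ (t - s) - σ t) (σ (t - s) + σ t - σ s)
(σ t σ s + Γ) / 2`, and the first factor is the subadditivity defect of the concave `σ`. -/
theorem exists_pos_mul_le_det (hv : IsConcaveStdDev v) (ht : 0 < t) :
    ∃ ε > 0, ∀ s ∈ Ioo 0 t, ε * (v s * v (t - s)) ≤ v t * v s - Gam v s t ^ 2 := by
  obtain ⟨ε, hε, hdefect⟩ := hv.strictConcaveOn_sqrt.exists_pos_mul_le_mul_add_sub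
    hv.strictMonoOn_sqrt.monotoneOn (by simp [hv.zero]) ht
  refine ⟨ε / 2, half_pos hε, fun s hs => ?_⟩
  obtain ⟨hs0, hst⟩ := hs
  have hG := hv.Gam_nonneg hs0.le hst.le
  have hdef := hdefect s ⟨hs0, hst⟩
  set a := √(v t)
  set c := √(v s)
  set d := √(v (t - s))
  have hvt : v t = a ^ 2 := (Real.sq_sqrt (hv.nonneg (hs0.trans hst).le)).symm
  have hvs : v s = c ^ 2 := (Real.sq_sqrt (hv.nonneg hs0.le)).symm
  have hvd : v (t - s) = d ^ 2 := (Real.sq_sqrt (hv.nonneg (sub_nonneg.2 hst.le))).symm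
  have hca : c ≤ a := hv.strictMonoOn_sqrt.monotoneOn (mem_Ici.2 hs0.le)
    (mem_Ici.2 (hs0.trans hst).le) hst.le
  have hc : 0 ≤ c := Real.sqrt_nonneg _
  have hd : 0 ≤ d := Real.sqrt_nonneg _
  have hdef0 : 0 ≤ c + d - a := by
    have : 0 < a := Real.sqrt_pos.2 (hv.pos t (hs0.trans hst))
    nlinarith [mul_nonneg (mul_nonneg hε.le hc) hd]
  have hfactor : v t * v s - Gam v s t ^ 2
      = (c + d - a) * (d + a - c) * (a * c + Gam v s t) / 2 := by
    have : Gam v s t = (a ^ 2 - d ^ 2 + c ^ 2) / 2 := by rw [Gam, hvt, hvs, hvd]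
    rw [hvt, hvs, this]; ring
  calc ε / 2 * (v s * v (t - s)) = ε * (c * d) * (c * d) / 2 := by rw [hvs, hvd]; ring
    _ ≤ a * (c + d - a) * (c * d) / 2 := by gcongr
    _ = (c + d - a) * d * (a * c) / 2 := by ring
    _ ≤ (c + d - a) * (d + a - c) * (a * c + Gam v s t) / 2 := by
      gcongr
      · exact mul_nonneg hdef0 (by linarith)
      · linarith
      · linarith
    _ = v t * v s - Gam v s t ^ 2 := hfactor.symm

theorem det_pos (hv : IsConcaveStdDev v) (hs : 0 < s) (hst : s < t) :
    0 < v t * v s - Gam v s t ^ 2 := by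
  obtain ⟨ε, hε, hdet⟩ := hv.exists_pos_mul_le_det (hs.trans hst)
  have := hv.pos s hs
  have := hv.pos (t - s) (sub_pos.2 hst)
  exact (by positivity : 0 < ε * (v s * v (t - s))).trans_le (hdet s ⟨hs, hst⟩)

theorem kvf_le (hv : IsConcaveStdDev v) (hs : 0 ≤ s) (hst : s ≤ t) (ht : 0 < t)
    (hy : 0 ≤ b + c₂ * t) : kvf b c₂ v s t ≤ b + c₂ * t := by
  rw [kvf, div_le_iff₀ (hv.pos t ht)]
  nlinarith [hv.Gam_le hs hst]

theorem mem_image_Ups (hv : IsConcaveStdDev v) (hc₁ : 0 < c₁) (hy : 0 ≤ b + c₂ * t)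
    (hyt : b + c₂ * t < c₁ * t) :
    (b + c₂ * t) ^ 2 / (2 * v t) ∈ (fun s => Ups b c₁ c₂ v s t) '' Ioo 0 t := by
  obtain ⟨s, hrs, hst⟩ := exists_between ((div_lt_iff₀ hc₁).2 (by linarith : b + c₂ * t < t * c₁))
  have hs : 0 < s := (div_nonneg hy hc₁.le).trans_lt hrs
  have hk : kvf b c₂ v s t ≤ c₁ * s :=
    (hv.kvf_le hs.le hst.le (hs.trans hst) hy).trans ((div_lt_iff₀' hc₁).1 hrs).le
  exact ⟨s, ⟨hs, hst⟩, Ups_eq_of_kvf_le hk⟩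

theorem sq_kvf_sub_mul_le (hv : IsConcaveStdDev v) (hs : 0 < s) (hst : s < t) (hc₁ : 0 ≤ c₁)
    (h : c₁ * s < kvf b c₂ v s t) :
    (kvf b c₂ v s t - c₁ * s) ^ 2 * v t ≤ v s * (b + c₂ * t) ^ 2 := by
  have hvt := hv.pos t (hs.trans hst)
  have hk2 : (kvf b c₂ v s t - c₁ * s) ^ 2 ≤ kvf b c₂ v s t ^ 2 :=
    pow_le_pow_left₀ (by linarith) (by nlinarith) 2
  have hkv : kvf b c₂ v s t ^ 2 * v t = Gam v s t ^ 2 / v t * (b + c₂ * t) ^ 2 := by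
    rw [kvf]; field_simp
  have hG : Gam v s t ^ 2 / v t ≤ v s := by
    rw [div_le_iff₀ hvt]; linarith [hv.det_pos hs hst]
  calc (kvf b c₂ v s t - c₁ * s) ^ 2 * v t ≤ kvf b c₂ v s t ^ 2 * v t := by gcongr
    _ ≤ v s * (b + c₂ * t) ^ 2 := by rw [hkv]; gcongr

/-- In the branch `c₁ s < k(s, t)` one has `s < (b + c₂ t) / c₁ < t`, which keeps `v (t - s)` and
hence the determinant away from `0`. -/
theorem bddAbove_image_Ups (hv : IsConcaveStdDev v) (hc₁ : 0 < c₁) (hy : 0 ≤ b + c₂ * t)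
    (hyt : b + c₂ * t < c₁ * t) : BddAbove ((fun s => Ups b c₁ c₂ v s t) '' Ioo 0 t) := by
  set y := b + c₂ * t
  have ht : 0 < t := pos_of_mul_pos_right (hy.trans_lt hyt) hc₁.le
  set r := y / c₁
  have hrt : r < t := (div_lt_iff₀ hc₁).2 (by linarith)
  have hvr : 0 < v (t - r) := hv.pos _ (sub_pos.2 hrt)
  obtain ⟨ε, hε, hdet⟩ := hv.exists_pos_mul_le_det ht
  refine ⟨y ^ 2 / (2 * v t) + y ^ 2 / (2 * (ε * v (t - r))), ?_⟩
  rintro _ ⟨s, ⟨hs, hst⟩, rfl⟩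
  dsimp only
  have hvt := hv.pos t ht
  have hvs := hv.pos s hs
  by_cases h : c₁ * s < kvf b c₂ v s t
  swap
  · rw [Ups_eq_of_kvf_le (not_lt.1 h)]
    exact le_add_of_nonneg_right (by positivity)
  have hk := hv.kvf_le hs.le hst.le ht hy
  have hsr : s < r := (lt_div_iff₀ hc₁).2 (by linarith)
  have hvtr : v (t - r) ≤ v (t - s) :=
    hv.monotoneOn (mem_Ici.2 (by linarith)) (mem_Ici.2 (by linarith)) (by linarith)
  have hD := hdet s ⟨hs, hst⟩
  have hDpos := hv.det_pos hs hst
  have hnum := hv.sq_kvf_sub_mul_le hs hst hc₁.le h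
  rw [Ups_eq_of_lt_kvf hvt.ne' hDpos.ne' h]
  gcongr _ + ?_
  calc (kvf b c₂ v s t - c₁ * s) ^ 2 * v t / (2 * (v t * v s - Gam v s t ^ 2))
      ≤ v s * y ^ 2 / (2 * (ε * v s * v (t - r))) := by
        gcongr
        calc ε * v s * v (t - r) ≤ ε * (v s * v (t - s)) := by
              rw [mul_assoc]; gcongr
          _ ≤ _ := hD
    _ = y ^ 2 / (2 * (ε * v (t - r))) := by field_simp

end IsConcaveStdDev

theorem cor_3_7_general (b c₁ c₂ : ℝ) (hb : 0 < b) (hc₂ : 0 < c₂) (hc : c₂ < c₁)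
    (v : ℝ → ℝ) (hv0 : v 0 = 0) (hvpos : ∀ u > 0, 0 < v u)
    (hmono : StrictMonoOn (fun u => Real.sqrt (v u)) (Ici 0))
    (hconc : StrictConcaveOn ℝ (Ici 0) (fun u => Real.sqrt (v u)))
    (tF : ℝ)
    (hglob : ∀ t ∈ Ioi (0 : ℝ),
      (b + c₂ * tF) ^ 2 / (2 * v tF) ≤ (b + c₂ * t) ^ 2 / (2 * v t))
    (htF : b / (c₁ - c₂) < tF)
    (hc1F : ∀ s ∈ Ioo (0 : ℝ) tF, kvf b c₂ v s tF / s ≤ c₁) :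
    sInf ((fun t => sSup ((fun s => Ups b c₁ c₂ v s t) '' Ioo (0 : ℝ) t)) ''
        Ioi (b / (c₁ - c₂))) = (b + c₂ * tF) ^ 2 / (2 * v tF) := by
  have hv : IsConcaveStdDev v := ⟨hv0, hvpos, hmono, hconc⟩
  have hc₁ : 0 < c₁ := hc₂.trans hc
  have ht₀ : 0 < b / (c₁ - c₂) := div_pos hb (sub_pos.2 hc)
  have hy_of_lt : ∀ t, b / (c₁ - c₂) < t → 0 ≤ b + c₂ * t ∧ b + c₂ * t < c₁ * t := fun t ht =>
    ⟨by nlinarith, by rw [div_lt_iff₀ (sub_pos.2 hc)] at ht; linarith⟩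
  have htF0 : 0 < tF := ht₀.trans htF
  refine IsLeast.csInf_eq ⟨⟨tF, htF, sSup_image_Ups_of_forall_kvf_le htF0 fun s hs => ?_⟩, ?_⟩
  · exact (div_le_iff₀ hs.1).1 (hc1F s hs)
  rintro _ ⟨t, ht, rfl⟩
  obtain ⟨hy, hyt⟩ := hy_of_lt t ht
  exact (hglob t (ht₀.trans ht)).trans
    (le_csSup (hv.bddAbove_image_Ups hc₁ hy hyt) (hv.mem_image_Ups hc₁ hy hyt))

/-- Corollary 3.7 / equation (18): if t_F globally minimizes L_{c₂}(t) = (b+c₂t)²/(2v(t)),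
t_F > t₀, and c₁ ≥ sup_{s∈(0,t_F)} k(s,t_F)/s, then the tandem lower bound
inf_{t>t₀} sup_{s∈(0,t)} Υ(s,t) equals L_{c₂}(t_F). -/
theorem cor_3_7 (b c₁ c₂ : ℝ) (hb : 0 < b) (hc₂ : 0 < c₂) (hc : c₂ < c₁)
    (v : ℝ → ℝ) (hv0 : v 0 = 0) (hvpos : ∀ u > 0, 0 < v u)
    (hvcont : ContinuousOn v (Ici 0))
    (hC2 : ContDiffOn ℝ 2 (fun u => Real.sqrt (v u)) (Ici 0))
    (hmono : StrictMonoOn (fun u => Real.sqrt (v u)) (Ici 0))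
    (hconc : StrictConcaveOn ℝ (Ici 0) (fun u => Real.sqrt (v u)))
    (hPD : ∀ s t : ℝ, 0 < s → s < t → (SigTS v s t).PosDef ∧ (SigM v s t).PosDef)
    (tF : ℝ) (htF0 : 0 < tF)
    (hglob : ∀ t ∈ Ioi (0 : ℝ),
      (b + c₂ * tF) ^ 2 / (2 * v tF) ≤ (b + c₂ * t) ^ 2 / (2 * v t))
    (htF : b / (c₁ - c₂) < tF)
    (hc1F : ∀ s ∈ Ioo (0 : ℝ) tF, kvf b c₂ v s tF / s ≤ c₁) :
    sInf ((fun t => sSup ((fun s => Ups b c₁ c₂ v s t) '' Ioo (0 : ℝ) t)) ''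
        Ioi (b / (c₁ - c₂))) = (b + c₂ * tF) ^ 2 / (2 * v tF) :=
  cor_3_7_general b c₁ c₂ hb hc₂ hc v hv0 hvpos hmono hconc tF hglob htF hc1F

end
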